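/- For every ξ ∈ P⊥, the quantity χ*(ξ) := sup{∫_{S²} g dξ : g ∈ C} satisfies χ*(ξ) ≤ (√(3/8) − 1/2)·inf{‖ξ + η‖ : η ∈ C⊥}, where ‖·‖ is the total variation norm. -/

import Mathlib

open MeasureTheory Metric Filter
open scoped RealInnerProductSpace

noncomputable section

/-- The support function of a set `K ⊆ ℝ³`. -/
def suppFn (K : Set (EuclideanSpace ℝ (Fin 3))) (u : EuclideanSpace ℝ (Fin 3)) : ℝ :=
  sSup ((fun x => ⟪x, u⟫) '' K)

/-- A body of constant width one in `ℝ³`. -/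
def IsBodyOfConstantWidthOne (K : Set (EuclideanSpace ℝ (Fin 3))) : Prop :=
  K.Nonempty ∧ IsCompact K ∧ Convex ℝ K ∧
    ∀ u : EuclideanSpace ℝ (Fin 3), suppFn K u + suppFn K (-u) = ‖u‖

/-- The unit sphere `S²` in `ℝ³`, as a type. -/
abbrev Sph : Type := Metric.sphere (0 : EuclideanSpace ℝ (Fin 3)) 1

/-- The integral of a function against a finite signed Borel measure on `S²`. -/
def sint (ξ : SignedMeasure Sph) (g : Sph → ℝ) : ℝ :=
  (∫ u, g u ∂ξ.toJordanDecomposition.posPart) - ∫ u, g u ∂ξ.toJordanDecomposition.negPart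

/-- The total variation norm of a finite signed Borel measure on `S²`. -/
def tvNorm (ξ : SignedMeasure Sph) : ℝ := (ξ.totalVariation Set.univ).toReal

/-- `C`: continuous functions `g` on `S²` such that `g + 1/2` is the sphere restriction of the
support function of a body of constant width one. -/
def Cw : Set (Sph → ℝ) :=
  {g | Continuous g ∧ ∃ K : Set (EuclideanSpace ℝ (Fin 3)), IsBodyOfConstantWidthOne K ∧
    ∀ u : Sph, g u + 1 / 2 = suppFn K u}

/-- `P⊥`: signed measures annihilating the restrictions of linear functions. -/
def Pperp : Set (SignedMeasure Sph) :=
  {ξ | ∀ a : EuclideanSpace ℝ (Fin 3), sint ξ (fun u => ⟪a, (u : EuclideanSpace ℝ (Fin 3))⟫) = 0}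

/-- `C⊥`: signed measures annihilating every element of `C`. -/
def Cperp : Set (SignedMeasure Sph) :=
  {η | ∀ g ∈ Cw, sint η g = 0}

/-! A body of constant width one has diameter one, so by Jung's theorem it lies in a ball
`B(c, √(3/8))`; as its support function satisfies `h(u) + h(-u) = 1`, every `g ∈ C` is within
`√(3/8) - 1/2` of the linear function `⟪c, ·⟫` on `S²`. Linear functions belong to `C` (balls of
radius `1/2`), so for `ξ ∈ P⊥` and `η ∈ C⊥` we get
`∫ g dξ = ∫ (g - ⟪c, ·⟫) d(ξ + η) ≤ (√(3/8) - 1/2) ‖ξ + η‖`.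

Jung's theorem: the centre `c` of the smallest ball `B(c, R)` containing finitely many points is a
convex combination `∑ wᵢ pᵢ` of the points at distance `R`, and then
`2R² = ∑ᵢⱼ wᵢ wⱼ ‖pᵢ - pⱼ‖² ≤ d² (1 - ∑ wᵢ²) ≤ d² n / (n + 1)` when at most `n + 1` points are
involved; Helly's theorem passes to arbitrary sets. -/

open Topology

lemma exists_center_minimizing_max_dist {α : Type*} [PseudoMetricSpace α] [ProperSpace α]
    {s : Finset α} (hs : s.Nonempty) :
    ∃ c R, (∀ p ∈ s, dist p c ≤ R) ∧ ∀ y, ∃ p ∈ s, R ≤ dist p y := by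
  obtain ⟨p₀, hp₀⟩ := hs
  have : Nonempty α := ⟨p₀⟩
  set f : α → ℝ := fun x => s.sup' ⟨p₀, hp₀⟩ (dist · x)
  have hf : Continuous f := Continuous.finset_sup'_apply _ fun p _ => by fun_prop
  have hf_tendsto : Tendsto f (cocompact α) atTop :=
    tendsto_atTop_mono (fun x => Finset.le_sup' (dist · x) hp₀)
      (tendsto_dist_left_cocompact_atTop p₀)
  obtain ⟨c, hc⟩ := hf.exists_forall_le hf_tendsto
  refine ⟨c, f c, fun p hp => Finset.le_sup' (dist · c) hp, fun y => ?_⟩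
  obtain ⟨p, hp, hpy⟩ := Finset.exists_mem_eq_sup' ⟨p₀, hp₀⟩ (dist · y)
  exact ⟨p, hp, hpy ▸ hc y⟩

lemma sum_sum_mul_norm_sub_sq_le {F ι : Type*} [SeminormedAddCommGroup F] {T : Finset ι}
    {w : ι → ℝ} {x : ι → F} {d : ℝ} (hw₀ : ∀ i ∈ T, 0 ≤ w i) (hw : ∑ i ∈ T, w i = 1)
    (hd : ∀ i ∈ T, ∀ j ∈ T, ‖x i - x j‖ ≤ d) :
    ∑ i ∈ T, ∑ j ∈ T, w i * w j * ‖x i - x j‖ ^ 2 ≤ d ^ 2 * (1 - ∑ i ∈ T, w i ^ 2) := by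
  classical
  have hrow : ∀ i ∈ T, ∑ j ∈ T, w i * w j * ‖x i - x j‖ ^ 2 ≤
      ∑ j ∈ T, w i * w j * d ^ 2 - w i ^ 2 * d ^ 2 := by
    intro i hi
    rw [← Finset.add_sum_erase T _ hi, ← Finset.add_sum_erase T _ hi, sub_self, norm_zero]
    have hoff : ∑ j ∈ T.erase i, w i * w j * ‖x i - x j‖ ^ 2 ≤
        ∑ j ∈ T.erase i, w i * w j * d ^ 2 := by
      refine Finset.sum_le_sum fun j hj => ?_
      have hj' := Finset.mem_of_mem_erase hj
      gcongr
      · exact mul_nonneg (hw₀ i hi) (hw₀ j hj')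
      · exact hd i hi j hj'
    nlinarith
  calc ∑ i ∈ T, ∑ j ∈ T, w i * w j * ‖x i - x j‖ ^ 2
      ≤ ∑ i ∈ T, (∑ j ∈ T, w i * w j * d ^ 2 - w i ^ 2 * d ^ 2) := Finset.sum_le_sum hrow
    _ = d ^ 2 * (1 - ∑ i ∈ T, w i ^ 2) := by
        simp only [Finset.sum_sub_distrib, ← Finset.sum_mul, ← Finset.mul_sum, hw]
        ring

section Jung

variable {E : Type*} [NormedAddCommGroup E] [InnerProductSpace ℝ E]

lemma eventually_dist_add_smul_lt {p c v : E} (h : 0 < ⟪v, p - c⟫) :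
    ∀ᶠ t in 𝓝[>] (0 : ℝ), dist p (c + t • v) < dist p c := by
  have hsmall : ∀ᶠ t in 𝓝[>] (0 : ℝ), t * ‖v‖ ^ 2 < 2 * ⟪v, p - c⟫ := by
    have : Tendsto (fun t : ℝ => t * ‖v‖ ^ 2) (𝓝[>] 0) (𝓝 (0 * ‖v‖ ^ 2)) :=
      (tendsto_nhdsWithin_of_tendsto_nhds tendsto_id).mul_const _
    exact this.eventually_lt_const (by linarith)
  filter_upwards [hsmall, self_mem_nhdsWithin] with t ht (htpos : 0 < t)
  have hexpand :
      dist p (c + t • v) ^ 2 = dist p c ^ 2 - t * (2 * ⟪v, p - c⟫ - t * ‖v‖ ^ 2) := by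
    rw [dist_eq_norm, dist_eq_norm, show p - (c + t • v) = (p - c) - t • v by abel,
      norm_sub_sq_real, real_inner_smul_right, norm_smul, Real.norm_eq_abs, abs_of_pos htpos,
      real_inner_comm]
    ring
  refine lt_of_pow_lt_pow_left₀ 2 dist_nonneg ?_
  rw [hexpand]
  nlinarith

/-- If `c` were outside, a hyperplane would separate it from the farthest points of `s`, and moving
`c` slightly towards them would bring every point of `s` closer than `R`. -/
lemma mem_convexHull_of_forall_exists_le_dist [CompleteSpace E] {s : Finset E} {c : E} {R : ℝ}
    (hc : ∀ p ∈ s, dist p c ≤ R) (hmin : ∀ y, ∃ p ∈ s, R ≤ dist p y) :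
    c ∈ convexHull ℝ {p ∈ (s : Set E) | dist p c = R} := by
  set T := {p ∈ (s : Set E) | dist p c = R}
  by_contra hcT
  have hT_closed : IsClosed (convexHull ℝ T) :=
    ((s.finite_toSet.subset fun _ hp => hp.1).isCompact_convexHull ℝ).isClosed
  obtain ⟨f, u, hfc, hfT⟩ := geometric_hahn_banach_point_closed (convex_convexHull ℝ T)
    hT_closed hcT
  set v := (InnerProductSpace.toDual ℝ E).symm f
  have hnear : ∀ p ∈ s, ∀ᶠ t in 𝓝[>] (0 : ℝ), dist p (c + t • v) < R := by
    intro p hp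
    by_cases hpR : dist p c = R
    · have hpos : 0 < ⟪v, p - c⟫ := by
        rw [InnerProductSpace.toDual_symm_apply, map_sub]
        linarith [hfT p (subset_convexHull ℝ T ⟨hp, hpR⟩)]
      simpa [hpR] using eventually_dist_add_smul_lt hpos
    · have hlim : Tendsto (fun t : ℝ => dist p (c + t • v)) (𝓝[>] 0) (𝓝 (dist p c)) := by
        have : Continuous fun t : ℝ => dist p (c + t • v) := by fun_prop
        simpa using (this.tendsto 0).mono_left nhdsWithin_le_nhds
      exact hlim.eventually_lt_const (lt_of_le_of_ne (hc p hp) hpR)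
  obtain ⟨t, ht⟩ := ((eventually_all_finset s).2 hnear).exists
  obtain ⟨p, hp, hRp⟩ := hmin (c + t • v)
  exact (ht p hp).not_ge hRp

lemma sum_sum_mul_norm_sub_sq_eq {ι : Type*} {T : Finset ι} {w : ι → ℝ} {x : ι → E} {c : E}
    (hw : ∑ i ∈ T, w i = 1) (hc : ∑ i ∈ T, w i • x i = c) :
    ∑ i ∈ T, ∑ j ∈ T, w i * w j * ‖x i - x j‖ ^ 2 = 2 * ∑ i ∈ T, w i * ‖x i - c‖ ^ 2 := by
  set S := ∑ i ∈ T, w i * ‖x i - c‖ ^ 2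
  have hbary : ∑ j ∈ T, w j • (x j - c) = 0 := by
    simp only [smul_sub, Finset.sum_sub_distrib, ← Finset.sum_smul, hw, one_smul, hc, sub_self]
  have hrow : ∀ i, ∑ j ∈ T, w j * ‖x i - x j‖ ^ 2 = ‖x i - c‖ ^ 2 + S := by
    intro i
    calc ∑ j ∈ T, w j * ‖x i - x j‖ ^ 2
        = ∑ j ∈ T, (w j * ‖x i - c‖ ^ 2 + w j * ‖x j - c‖ ^ 2
            - 2 * ⟪x i - c, w j • (x j - c)⟫) := by
          refine Finset.sum_congr rfl fun j _ => ?_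
          rw [show x i - x j = (x i - c) - (x j - c) by abel, norm_sub_sq_real,
            real_inner_smul_right]
          ring
      _ = (∑ j ∈ T, w j) * ‖x i - c‖ ^ 2 + S
            - 2 * ⟪x i - c, ∑ j ∈ T, w j • (x j - c)⟫ := by
          rw [Finset.sum_sub_distrib, Finset.sum_add_distrib, Finset.sum_mul, inner_sum,
            Finset.mul_sum]
      _ = ‖x i - c‖ ^ 2 + S := by rw [hw, hbary, inner_zero_right]; ring
  calc ∑ i ∈ T, ∑ j ∈ T, w i * w j * ‖x i - x j‖ ^ 2
      = ∑ i ∈ T, (w i * ‖x i - c‖ ^ 2 + w i * S) := by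
        refine Finset.sum_congr rfl fun i _ => ?_
        simp only [mul_assoc, ← Finset.mul_sum, hrow]
        ring
    _ = 2 * S := by rw [Finset.sum_add_distrib, ← Finset.sum_mul, hw]; ring

theorem exists_forall_dist_le_of_card_le [FiniteDimensional ℝ E] {s : Finset E} {n : ℕ} {d : ℝ}
    (hcard : s.card ≤ n + 1) (hd : ∀ p ∈ s, ∀ q ∈ s, dist p q ≤ d) :
    ∃ c, ∀ p ∈ s, dist p c ≤ d * √(n / (2 * (n + 1))) := by
  classical
  rcases s.eq_empty_or_nonempty with rfl | hs
  · exact ⟨0, by simp⟩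
  obtain ⟨c, R, hcR, hmin⟩ := exists_center_minimizing_max_dist hs
  refine ⟨c, fun p hp => (hcR p hp).trans ?_⟩
  set T := s.filter (dist · c = R)
  have hTs : T ⊆ s := Finset.filter_subset _ _
  have hc : c ∈ convexHull ℝ (T : Set E) := by
    rw [Finset.coe_filter]; exact mem_convexHull_of_forall_exists_le_dist hcR hmin
  obtain ⟨w, hw₀, hw, hwc⟩ := Finset.mem_convexHull'.1 hc
  have hsq : 1 ≤ (n + 1) * ∑ q ∈ T, w q ^ 2 := by
    have hcs := sq_sum_le_card_mul_sum_sq (s := T) (f := w)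
    have : (T.card : ℝ) ≤ n + 1 := by exact_mod_cast (Finset.card_le_card hTs).trans hcard
    rw [hw, one_pow] at hcs
    nlinarith [Finset.sum_nonneg fun q (_ : q ∈ T) => sq_nonneg (w q)]
  have hnorm : ∀ q ∈ T, ‖q - c‖ = R := fun q hq => by
    rw [← dist_eq_norm]; exact (Finset.mem_filter.1 hq).2
  have hvar : ∑ q ∈ T, w q * ‖q - c‖ ^ 2 = R ^ 2 := by
    rw [Finset.sum_congr rfl fun q hq => by rw [hnorm q hq], ← Finset.sum_mul, hw, one_mul]
  have h2R : 2 * R ^ 2 ≤ d ^ 2 * (1 - ∑ q ∈ T, w q ^ 2) := by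
    rw [← hvar, ← sum_sum_mul_norm_sub_sq_eq (x := fun q => q) hw hwc]
    exact sum_sum_mul_norm_sub_sq_le hw₀ hw fun p hp q hq => by
      rw [← dist_eq_norm]; exact hd p (hTs hp) q (hTs hq)
  have hR : 0 ≤ R := dist_nonneg.trans (hcR p hp)
  have hd₀ : 0 ≤ d := dist_self p ▸ hd p hp p hp
  rw [← pow_le_pow_iff_left₀ hR (by positivity) two_ne_zero, mul_pow,
    Real.sq_sqrt (by positivity), div_eq_mul_inv, ← mul_assoc, le_mul_inv_iff₀ (by positivity)]
  nlinarith

theorem exists_forall_dist_le_jung [FiniteDimensional ℝ E] {K : Set E} {d : ℝ}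
    (hd : ∀ p ∈ K, ∀ q ∈ K, dist p q ≤ d) :
    ∃ c, ∀ p ∈ K, dist p c ≤
      d * √(Module.finrank ℝ E / (2 * (Module.finrank ℝ E + 1))) := by
  classical
  set r := d * √(Module.finrank ℝ E / (2 * (Module.finrank ℝ E + 1)))
  obtain ⟨c, hc⟩ : (⋂ p : K, closedBall (p : E) r).Nonempty := by
    refine Convex.helly_theorem_compact' (fun _ => convex_closedBall _ _)
      (fun _ => isCompact_closedBall _ _) fun I hI => ?_
    obtain ⟨c, hc⟩ := exists_forall_dist_le_of_card_le (s := I.image Subtype.val)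
      (Finset.card_image_le.trans hI) (by
        simp only [Finset.mem_image]
        rintro _ ⟨p, -, rfl⟩ _ ⟨q, -, rfl⟩
        exact hd p p.2 q q.2)
    exact ⟨c, Set.mem_iInter₂.2 fun p hp => mem_closedBall_comm.1 <|
      hc p (Finset.mem_image_of_mem _ hp)⟩
  exact ⟨c, fun p hp => mem_closedBall_comm.1 (Set.mem_iInter.1 hc ⟨p, hp⟩)⟩

end Jung

local notation "E3" => EuclideanSpace ℝ (Fin 3)

lemma suppFn_le_of_subset_closedBall {K : Set E3} (hK : K.Nonempty) {c : E3} {r : ℝ}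
    (hKc : K ⊆ closedBall c r) (u : E3) : suppFn K u ≤ ⟪c, u⟫ + r * ‖u‖ := by
  refine csSup_le (hK.image _) ?_
  rintro _ ⟨x, hx, rfl⟩
  have hxc : ‖x - c‖ ≤ r := by rw [← dist_eq_norm]; exact hKc hx
  calc ⟪x, u⟫ = ⟪c, u⟫ + ⟪x - c, u⟫ := by rw [inner_sub_left]; ring
    _ ≤ ⟪c, u⟫ + ‖x - c‖ * ‖u‖ := by gcongr; exact real_inner_le_norm _ _
    _ ≤ ⟪c, u⟫ + r * ‖u‖ := by gcongr

lemma suppFn_closedBall (c : E3) {r : ℝ} (hr : 0 ≤ r) (u : E3) :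
    suppFn (closedBall c r) u = ⟪c, u⟫ + r * ‖u‖ := by
  refine (suppFn_le_of_subset_closedBall (nonempty_closedBall.2 hr) subset_rfl u).antisymm ?_
  have hbdd : BddAbove ((fun x => ⟪x, u⟫) '' closedBall c r) :=
    ((isCompact_closedBall c r).image (by fun_prop)).bddAbove
  rcases eq_or_ne u 0 with rfl | hu
  · simp only [inner_zero_right, norm_zero, mul_zero, add_zero]
    exact le_csSup_of_le hbdd ⟨c, mem_closedBall_self hr, rfl⟩ (inner_zero_right c).ge
  have hu' : 0 < ‖u‖ := norm_pos_iff.2 hu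
  refine le_csSup_of_le hbdd ⟨c + (r / ‖u‖) • u, ?_, rfl⟩ ?_
  · rw [mem_closedBall, dist_eq_norm, add_sub_cancel_left, norm_smul, Real.norm_eq_abs,
      abs_of_nonneg (by positivity), div_mul_cancel₀ _ hu'.ne']
  · change _ ≤ ⟪c + (r / ‖u‖) • u, u⟫
    rw [inner_add_left, real_inner_smul_left, real_inner_self_eq_norm_sq]
    field_simp
    rfl

lemma IsBodyOfConstantWidthOne.dist_le_one {K : Set E3} (hK : IsBodyOfConstantWidthOne K)
    {p q : E3} (hp : p ∈ K) (hq : q ∈ K) : dist p q ≤ 1 := by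
  obtain ⟨-, hKc, -, hwidth⟩ := hK
  have hbdd : ∀ u : E3, BddAbove ((fun x => ⟪x, u⟫) '' K) := fun u =>
    (hKc.image (by fun_prop)).bddAbove
  have hp' : ⟪p, p - q⟫ ≤ suppFn K (p - q) := le_csSup (hbdd _) ⟨p, hp, rfl⟩
  have hq' : ⟪q, -(p - q)⟫ ≤ suppFn K (-(p - q)) := le_csSup (hbdd _) ⟨q, hq, rfl⟩
  have hsq : ‖p - q‖ ^ 2 ≤ ‖p - q‖ := by
    rw [inner_neg_right] at hq'
    rw [← real_inner_self_eq_norm_sq, ← hwidth, inner_sub_left]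
    linarith
  rw [dist_eq_norm]
  nlinarith [norm_nonneg (p - q)]

lemma isBodyOfConstantWidthOne_closedBall (c : E3) :
    IsBodyOfConstantWidthOne (closedBall c (1 / 2)) := by
  refine ⟨nonempty_closedBall.2 (by norm_num), isCompact_closedBall _ _, convex_closedBall _ _,
    fun u => ?_⟩
  rw [suppFn_closedBall c (by norm_num), suppFn_closedBall c (by norm_num), inner_neg_right,
    norm_neg]
  ring

lemma norm_coe_sph (u : Sph) : ‖(u : E3)‖ = 1 := mem_sphere_zero_iff_norm.1 u.2

lemma inner_mem_Cw (c : E3) : (fun u : Sph => ⟪c, (u : E3)⟫) ∈ Cw := by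
  refine ⟨by fun_prop, closedBall c (1 / 2), isBodyOfConstantWidthOne_closedBall c, fun u => ?_⟩
  rw [suppFn_closedBall c (by norm_num), norm_coe_sph]
  ring

lemma exists_abs_sub_inner_le_of_mem_Cw {g : Sph → ℝ} (hg : g ∈ Cw) :
    ∃ c : E3, ∀ u : Sph, |g u - ⟪c, (u : E3)⟫| ≤ √(3 / 8) - 1 / 2 := by
  obtain ⟨-, K, hK, hgK⟩ := hg
  obtain ⟨c, hc⟩ := exists_forall_dist_le_jung fun p hp q hq => hK.dist_le_one hp hq
  have hradius : (1 : ℝ) * √(Module.finrank ℝ E3 / (2 * (Module.finrank ℝ E3 + 1))) =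
      √(3 / 8) := by
    rw [finrank_euclideanSpace, Fintype.card_fin]; norm_num
  have hsupp := suppFn_le_of_subset_closedBall hK.1 (c := c) (r := √(3 / 8)) fun p hp =>
    mem_closedBall.2 (hradius ▸ hc p hp)
  refine ⟨c, fun u => abs_le.2 ⟨?_, ?_⟩⟩
  · have hneg := hsupp (-(u : E3))
    have hwidth := hK.2.2.2 u
    rw [inner_neg_right, norm_neg, norm_coe_sph] at hneg
    rw [norm_coe_sph] at hwidth
    linarith [hgK u]
  · have hpos := hsupp u
    rw [norm_coe_sph] at hpos
    linarith [hgK u]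

lemma Continuous.integrable_of_compactSpace {X : Type*} [TopologicalSpace X] [CompactSpace X]
    [MeasurableSpace X] [OpensMeasurableSpace X] {μ : Measure X} [IsFiniteMeasure μ]
    {g : X → ℝ} (hg : Continuous g) : Integrable g μ :=
  hg.integrable_of_hasCompactSupport (HasCompactSupport.of_compactSpace g)

lemma sint_eq_integral_sub_integral {ξ : SignedMeasure Sph} {μ ν : Measure Sph}
    [IsFiniteMeasure μ] [IsFiniteMeasure ν] (hξ : ξ = μ.toSignedMeasure - ν.toSignedMeasure)
    {g : Sph → ℝ} (hg : Continuous g) : sint ξ g = ∫ u, g u ∂μ - ∫ u, g u ∂ν := by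
  set P := ξ.toJordanDecomposition.posPart
  set N := ξ.toJordanDecomposition.negPart
  have hPN : P.toSignedMeasure - N.toSignedMeasure = ξ := ξ.toSignedMeasure_toJordanDecomposition
  have hmeas : P + ν = μ + N := by
    rw [← Measure.toSignedMeasure_eq_toSignedMeasure_iff, Measure.toSignedMeasure_add,
      Measure.toSignedMeasure_add, ← sub_eq_sub_iff_add_eq_add, hPN, hξ]
  have hint := congrArg (fun m => ∫ u, g u ∂m) hmeas
  simp only [integral_add_measure hg.integrable_of_compactSpace hg.integrable_of_compactSpace]
    at hint
  simp only [sint]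
  linarith

lemma sint_add (ξ η : SignedMeasure Sph) {g : Sph → ℝ} (hg : Continuous g) :
    sint (ξ + η) g = sint ξ g + sint η g := by
  set P₁ := ξ.toJordanDecomposition.posPart
  set N₁ := ξ.toJordanDecomposition.negPart
  set P₂ := η.toJordanDecomposition.posPart
  set N₂ := η.toJordanDecomposition.negPart
  have hξ : P₁.toSignedMeasure - N₁.toSignedMeasure = ξ := ξ.toSignedMeasure_toJordanDecomposition
  have hη : P₂.toSignedMeasure - N₂.toSignedMeasure = η := η.toSignedMeasure_toJordanDecomposition
  have hsum : ξ + η = (P₁ + P₂).toSignedMeasure - (N₁ + N₂).toSignedMeasure := by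
    rw [Measure.toSignedMeasure_add, Measure.toSignedMeasure_add, add_sub_add_comm, hξ, hη]
  rw [sint_eq_integral_sub_integral hsum hg,
    integral_add_measure hg.integrable_of_compactSpace hg.integrable_of_compactSpace,
    integral_add_measure hg.integrable_of_compactSpace hg.integrable_of_compactSpace, sint, sint]
  ring

lemma sint_sub (ξ : SignedMeasure Sph) {g f : Sph → ℝ} (hg : Continuous g) (hf : Continuous f) :
    sint ξ (fun u => g u - f u) = sint ξ g - sint ξ f := by
  simp only [sint, integral_sub hg.integrable_of_compactSpace hf.integrable_of_compactSpace]
  ring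

lemma sint_le_mul_tvNorm (ξ : SignedMeasure Sph) {g : Sph → ℝ} {C : ℝ} (hC : ∀ u, |g u| ≤ C) :
    sint ξ g ≤ C * tvNorm ξ := by
  have hbound : ∀ μ : Measure Sph, [IsFiniteMeasure μ] → |∫ u, g u ∂μ| ≤ C * μ.real Set.univ :=
    fun μ _ => by
      simpa only [Real.norm_eq_abs] using norm_integral_le_of_norm_le_const (μ := μ)
        (.of_forall fun u => (Real.norm_eq_abs (g u)).trans_le (hC u))
  have htv : tvNorm ξ = ξ.toJordanDecomposition.posPart.real Set.univ +
      ξ.toJordanDecomposition.negPart.real Set.univ :=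
    ENNReal.toReal_add (measure_ne_top _ _) (measure_ne_top _ _)
  rw [htv, sint, mul_add]
  linarith [le_abs_self (∫ u, g u ∂ξ.toJordanDecomposition.posPart),
    neg_abs_le (∫ u, g u ∂ξ.toJordanDecomposition.negPart),
    hbound ξ.toJordanDecomposition.posPart, hbound ξ.toJordanDecomposition.negPart]

lemma zero_mem_Cperp : (0 : SignedMeasure Sph) ∈ Cperp := fun g _ => by
  simp [sint, SignedMeasure.toJordanDecomposition_zero]

lemma sint_le_mul_tvNorm_add {ξ η : SignedMeasure Sph} (hξ : ξ ∈ Pperp) (hη : η ∈ Cperp)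
    {g : Sph → ℝ} (hg : g ∈ Cw) : sint ξ g ≤ (√(3 / 8) - 1 / 2) * tvNorm (ξ + η) := by
  obtain ⟨c, hc⟩ := exists_abs_sub_inner_le_of_mem_Cw hg
  have hlin : Continuous fun u : Sph => ⟪c, (u : E3)⟫ := by fun_prop
  calc sint ξ g = sint (ξ + η) (fun u => g u - ⟪c, (u : E3)⟫) := by
        rw [sint_sub _ hg.1 hlin, sint_add _ _ hg.1, sint_add _ _ hlin, hη g hg,
          hη _ (inner_mem_Cw c), hξ c]
        ring
    _ ≤ (√(3 / 8) - 1 / 2) * tvNorm (ξ + η) := sint_le_mul_tvNorm _ hc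

theorem chiStar_le_quotient_norm (ξ : SignedMeasure Sph) (hξ : ξ ∈ Pperp) :
    sSup ((fun g => sint ξ g) '' Cw) ≤
      (Real.sqrt (3 / 8) - 1 / 2) * sInf ((fun η => tvNorm (ξ + η)) '' Cperp) := by
  have hr : 0 < √(3 / 8) - 1 / 2 := by
    rw [sub_pos, Real.lt_sqrt (by norm_num)]; norm_num
  refine Real.sSup_le ?_ (mul_nonneg hr.le (Real.sInf_nonneg ?_))
  · rintro _ ⟨g, hg, rfl⟩
    rw [← div_le_iff₀' hr]
    refine le_csInf ⟨_, 0, zero_mem_Cperp, rfl⟩ ?_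
    rintro _ ⟨η, hη, rfl⟩
    rw [div_le_iff₀' hr]
    exact sint_le_mul_tvNorm_add hξ hη hg
  · rintro _ ⟨η, -, rfl⟩
    exact ENNReal.toReal_nonneg
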